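/- arXiv:1809.05399 — 11 statements merged into one kernel-verified Lean document; each statement's English description precedes it below -/
import Mathlib

section
/- For every root x of V(x) = x^5 - x^4 - 4x^3 + 3x^2 + 3x - 1 (over the complex numbers or any field of characteristic 0), the value T(x) = x^4 - 4x^2 - x + 2 is a root of G(x) = x^5 + 2x^4 - 5x^3 - 2x^2 + 4x - 1. -/
/-- For every complex root `x` of `V(x) = x^5 - x^4 - 4x^3 + 3x^2 + 3x - 1`,
the value `T(x) = x^4 - 4x^2 - x + 2` is a root of
`G(x) = x^5 + 2x^4 - 5x^3 - 2x^2 + 4x - 1`. -/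
theorem T_sends_roots_of_V_to_roots_of_G (x : ℂ)
    (hx : x^5 - x^4 - 4*x^3 + 3*x^2 + 3*x - 1 = 0) :
    (x^4 - 4*x^2 - x + 2)^5 + 2*(x^4 - 4*x^2 - x + 2)^4
      - 5*(x^4 - 4*x^2 - x + 2)^3 - 2*(x^4 - 4*x^2 - x + 2)^2
      + 4*(x^4 - 4*x^2 - x + 2) - 1 = 0 := by
  linear_combination (-23 + 11*x + 188*x^2 - 28*x^3 - 557*x^4 - 92*x^5 + 735*x^6
    + 285*x^7 - 448*x^8 - 237*x^9 + 134*x^10 + 87*x^11 - 19*x^12 - 15*x^13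
    + x^14 + x^15) * hx
end

section
/- The polynomial V(x) = x^5 - x^4 - 4x^3 + 3x^2 + 3x - 1 divides G(D_1(x)) in ℚ[x], where D_1(x) = -x^3 + x^2 + 3x - 2 and G(x) = x^5 + 2x^4 - 5x^3 - 2x^2 + 4x - 1. -/
open Polynomial

/-- V divides G ∘ D₁ in ℚ[X], where D₁(x) = -x^3 + x^2 + 3x - 2. -/
theorem V_dvd_G_comp_D1 :
    (X^5 - X^4 - 4*X^3 + 3*X^2 + 3*X - 1 : ℚ[X]) ∣ (X^5 + 2*X^4 - 5*X^3 - 2*X^2 + 4*X - 1 : ℚ[X]).comp (-X^3 + X^2 + 3*X - 2 : ℚ[X]) := by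
  refine ⟨-X^10 + 4*X^9 + 5*X^8 - 34*X^7 + 4*X^6 + 99*X^5 - 54*X^4 - 108*X^3 + 80*X^2 + 27*X - 23, ?_⟩
  simp only [add_comp, sub_comp, mul_comp, pow_comp, X_comp, one_comp, ofNat_comp, neg_comp]
  ring
end

section
/- The polynomial V(x) = x^5 - x^4 - 4x^3 + 3x^2 + 3x - 1 divides G(D_2(x)) in ℚ[x], where D_2(x) = -x^3 + 2x and G(x) = x^5 + 2x^4 - 5x^3 - 2x^2 + 4x - 1. -/
open Polynomial

/-- V divides G ∘ D₂ in ℚ[X], where D₂(x) = -x^3 + 2x. -/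
theorem V_dvd_G_comp_D2 :
    (X^5 - X^4 - 4*X^3 + 3*X^2 + 3*X - 1 : ℚ[X]) ∣ (X^5 + 2*X^4 - 5*X^3 - 2*X^2 + 4*X - 1 : ℚ[X]).comp (-X^3 + 2*X : ℚ[X]) := by
  refine ⟨-X^10 - X^9 + 5*X^8 + 6*X^7 - 8*X^6 - 13*X^5 + 6*X^4 + 13*X^3 - 4*X^2 - 5*X + 1, ?_⟩
  simp only [add_comp, sub_comp, mul_comp, pow_comp, X_comp, ofNat_comp, one_comp, neg_comp]
  ring
end

section
/- The polynomial V(x) = x^5 - x^4 - 4x^3 + 3x^2 + 3x - 1 divides G(D_3(x)) in ℚ[x], where D_3(x) = x^3 - x^2 - 2x + 1 and G(x) = x^5 + 2x^4 - 5x^3 - 2x^2 + 4x - 1. -/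
open Polynomial

/-- V divides G ∘ D₃ in ℚ[X], where D₃(x) = x^3 - x^2 - 2x + 1. -/
theorem V_dvd_G_comp_D3 :
    (X^5 - X^4 - 4*X^3 + 3*X^2 + 3*X - 1 : ℚ[X]) ∣ (X^5 + 2*X^4 - 5*X^3 - 2*X^2 + 4*X - 1 : ℚ[X]).comp (X^3 - X^2 - 2*X + 1 : ℚ[X]) := by
  use X^10 - 4*X^9 + 18*X^7 - 16*X^6 - 26*X^5 + 35*X^4 + 13*X^3 - 22*X^2 - X + 1
  simp only [comp, eval₂_sub, eval₂_add, eval₂_mul, eval₂_pow, eval₂_X, eval₂_ofNat, eval₂_one]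
  ring
end

section
/- The polynomial V(x) = x^5 - x^4 - 4x^3 + 3x^2 + 3x - 1 divides G(D_5(x)) in ℚ[x], where D_5(x) = -x^4 + x^3 + 4x^2 - 2x - 3 and G(x) = x^5 + 2x^4 - 5x^3 - 2x^2 + 4x - 1. -/
open Polynomial

/-- V divides G ∘ D₅ in ℚ[X], where D₅(x) = -x^4 + x^3 + 4x^2 - 2x - 3. -/
theorem V_dvd_G_comp_D5 :
    (X^5 - X^4 - 4*X^3 + 3*X^2 + 3*X - 1 : ℚ[X]) ∣ (X^5 + 2*X^4 - 5*X^3 - 2*X^2 + 4*X - 1 : ℚ[X]).comp (-X^4 + X^3 + 4*X^2 - 2*X - 3 : ℚ[X]) := by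
  refine ⟨-X^15 + 4*X^14 + 10*X^13 - 51*X^12 - 38*X^11 + 268*X^10 + 73*X^9
    - 744*X^8 - 99*X^7 + 1151*X^6 + 145*X^5 - 946*X^4 - 161*X^3 + 340*X^2
    + 71*X - 23, ?_⟩
  simp only [comp, eval₂_add, eval₂_sub, eval₂_mul, eval₂_pow, eval₂_X,
    eval₂_one, eval₂_ofNat, eval₂_neg]
  ring
end

section
/- The polynomial G(x) = x^5 + 2x^4 - 5x^3 - 2x^2 + 4x - 1 divides V(I_2(x)) in ℚ[x], where I_2(x) = x^4 + 2x^3 - 5x^2 - 3x + 3 and V(x) = x^5 - x^4 - 4x^3 + 3x^2 + 3x - 1. -/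
open Polynomial

/-- G divides V ∘ I₂ in ℚ[X], where I₂(x) = x^4 + 2x^3 - 5x^2 - 3x + 3. -/
theorem G_dvd_V_comp_I2 :
    (X^5 + 2*X^4 - 5*X^3 - 2*X^2 + 4*X - 1 : ℚ[X]) ∣ (X^5 - X^4 - 4*X^3 + 3*X^2 + 3*X - 1 : ℚ[X]).comp (X^4 + 2*X^3 - 5*X^2 - 3*X + 3 : ℚ[X]) := by
  refine ⟨X^15 + 8*X^14 + 4*X^13 - 101*X^12 - 142*X^11 + 540*X^10 + 816*X^9
    - 1558*X^8 - 1972*X^7 + 2392*X^6 + 2331*X^5 - 1863*X^4 - 1307*X^3 + 677*X^2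
    + 274*X - 89, ?_⟩
  simp only [add_comp, sub_comp, mul_comp, pow_comp, X_comp, one_comp,
    ofNat_comp, natCast_comp]
  ring
end

section
/- The polynomial G(x) = x^5 + 2x^4 - 5x^3 - 2x^2 + 4x - 1 divides V(I_4(x)) in ℚ[x], where I_4(x) = -x^4 - 2x^3 + 5x^2 + 2x - 3 and V(x) = x^5 - x^4 - 4x^3 + 3x^2 + 3x - 1. -/
open Polynomial

/-- G divides V ∘ I₄ in ℚ[X], where I₄(x) = -x^4 - 2x^3 + 5x^2 + 2x - 3. -/
theorem G_dvd_V_comp_I4 :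
    (X^5 + 2*X^4 - 5*X^3 - 2*X^2 + 4*X - 1 : ℚ[X]) ∣ (X^5 - X^4 - 4*X^3 + 3*X^2 + 3*X - 1 : ℚ[X]).comp (-X^4 - 2*X^3 + 5*X^2 + 2*X - 3 : ℚ[X]) := by
  refine ⟨-X^15 - 8*X^14 - 4*X^13 + 96*X^12 + 110*X^11 - 537*X^10 - 510*X^9 + 1723*X^8
    + 835*X^7 - 2919*X^6 - 539*X^5 + 2589*X^4 + 93*X^3 - 1144*X^2 + 16*X + 199, ?_⟩
  simp only [add_comp, sub_comp, mul_comp, pow_comp, X_comp, neg_comp, one_comp,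
    ofNat_comp, natCast_comp]
  ring
end

section
/- For every root x of V(x) = x^5 - x^4 - 4x^3 + 3x^2 + 3x - 1, the composition I_4(D_4(x)) equals x, where D_4(x) = x^4 - 4x^2 - x + 2 and I_4(x) = -x^4 - 2x^3 + 5x^2 + 2x - 3. Equivalently, V(x) divides I_4(D_4(x)) - x in ℚ[x]. -/
open Polynomial

/-- `V(x)` divides `I₄(D₄(x)) - x` in `ℚ[X]`: on roots of `V`, the
composition `I₄ ∘ D₄` is the identity, where `D₄(x) = x^4 - 4x^2 - x + 2`
and `I₄(x) = -x^4 - 2x^3 + 5x^2 + 2x - 3`. -/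
theorem V_dvd_I4_comp_D4_sub_X :
    (X^5 - X^4 - 4*X^3 + 3*X^2 + 3*X - 1 : ℚ[X]) ∣
      ((-X^4 - 2*X^3 + 5*X^2 + 2*X - 3 : ℚ[X]).comp
        (X^4 - 4*X^2 - X + 2) - X) := by
  refine ⟨-X^11 - X^10 + 11*X^9 + 14*X^8 - 42*X^7 - 65*X^6 + 61*X^5 + 118*X^4
    - 22*X^3 - 72*X^2 + 11, ?_⟩
  simp only [sub_comp, add_comp, neg_comp, mul_comp, pow_comp, X_comp,
    natCast_comp, ofNat_comp]
  ring
end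

section
/- For every root y of G(x) = x^5 + 2x^4 - 5x^3 - 2x^2 + 4x - 1, the composition D_4(I_4(y)) equals y, where D_4(x) = x^4 - 4x^2 - x + 2 and I_4(x) = -x^4 - 2x^3 + 5x^2 + 2x - 3. Equivalently, G(x) divides D_4(I_4(x)) - x in ℚ[x]. -/
open Polynomial

/-- `G(x)` divides `D₄(I₄(x)) - x` in `ℚ[X]`: on roots of `G`, the
composition `D₄ ∘ I₄` is the identity. -/
theorem G_dvd_D4_comp_I4_sub_X :
    (X^5 + 2*X^4 - 5*X^3 - 2*X^2 + 4*X - 1 : ℚ[X]) ∣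
      ((X^4 - 4*X^2 - X + 2 : ℚ[X]).comp
        (-X^4 - 2*X^3 + 5*X^2 + 2*X - 3) - X) := by
  use X^11 + 6*X^10 - 3*X^9 - 58*X^8 - X^7 + 219*X^6 - 37*X^5 - 324*X^4 + 70*X^3 + 209*X^2 - 29*X - 50
  simp only [add_comp, sub_comp, mul_comp, pow_comp, X_comp, ofNat_comp, neg_comp]
  ring
end

section
/- The composition D_4(I_4(x)), where D_4(x) = x^4 - 4x^2 - x + 2 and I_4(x) = -x^4 - 2x^3 + 5x^2 + 2x - 3, factors over ℤ as (x^4 + 2x^3 - 5x^2 - 2x + 2)(x^4 + 2x^3 - 5x^2 - 2x + 5)(x^8 + 4x^7 - 6x^6 - 24x^5 + 22x^4 + 30x^3 - 21x^2 - 10x + 5). -/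
open Polynomial

/-- `D₄(I₄(x))` factors over ℤ as the stated product of two quartics and
an octic, where `D₄(x) = x^4 - 4x^2 - x + 2` and
`I₄(x) = -x^4 - 2x^3 + 5x^2 + 2x - 3`. -/
theorem D4_comp_I4_factorization :
    (X^4 - 4*X^2 - X + 2 : ℤ[X]).comp (-X^4 - 2*X^3 + 5*X^2 + 2*X - 3)
      = (X^4 + 2*X^3 - 5*X^2 - 2*X + 2)
        * (X^4 + 2*X^3 - 5*X^2 - 2*X + 5)
        * (X^8 + 4*X^7 - 6*X^6 - 24*X^5 + 22*X^4 + 30*X^3 - 21*X^2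
            - 10*X + 5) := by
  simp only [add_comp, sub_comp, mul_comp, pow_comp, X_comp, neg_comp,
    natCast_comp, ofNat_comp]
  ring
end

section
/- Define t_0(u) = u^2 - 2 and t_{i+1}(u) = t_i(u)^2 - 2, and set T_i(u) = t_i(u) - u. Then for every root x of V(x) = x^5 - x^4 - 4x^3 + 3x^2 + 3x - 1: T_0(x) is a root of A(x) = x^5 + 2x^4 - 5x^3 - 13x^2 - 7x - 1, and T_1(x) is a root of G(x) = x^5 + 2x^4 - 5x^3 - 2x^2 + 4x - 1. Equivalently, V(x) divides A(T_0(x)) and V(x) divides G(T_1(x)) in ℚ[x]. -/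
open Polynomial

/-- The recursive chain of auxiliary polynomials: `t 0 = X^2 - 2`,
`t (i+1) = (t i)^2 - 2`. -/
noncomputable def tChain : ℕ → ℚ[X]
  | 0 => X^2 - 2
  | i + 1 => (tChain i)^2 - 2

/-- The transformations `T i = t i - X`. -/
noncomputable def TChain (i : ℕ) : ℚ[X] := tChain i - X

/-- For every root of `V`, `T₀` sends it to a root of
`A(x) = x^5 + 2x^4 - 5x^3 - 13x^2 - 7x - 1` and `T₁` sends it to a root of
`G(x) = x^5 + 2x^4 - 5x^3 - 2x^2 + 4x - 1`; equivalently `V ∣ A ∘ T₀` and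
`V ∣ G ∘ T₁` in `ℚ[X]`. -/
theorem V_dvd_A_comp_T0_and_G_comp_T1 :
    (X^5 - X^4 - 4*X^3 + 3*X^2 + 3*X - 1 : ℚ[X]) ∣
      (X^5 + 2*X^4 - 5*X^3 - 13*X^2 - 7*X - 1 : ℚ[X]).comp (TChain 0)
    ∧ (X^5 - X^4 - 4*X^3 + 3*X^2 + 3*X - 1 : ℚ[X]) ∣
      (X^5 + 2*X^4 - 5*X^3 - 2*X^2 + 4*X - 1 : ℚ[X]).comp (TChain 1) := by
  constructor
  · refine ⟨(X^5 - 4*X^4 + 2*X^3 + 5*X^2 - 2*X - 1 : ℚ[X]), ?_⟩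
    simp only [TChain, tChain, add_comp, sub_comp, mul_comp, pow_comp, X_comp,
      one_comp, ofNat_comp, natCast_comp]
    ring
  · refine ⟨(X^15 + X^14 - 15*X^13 - 19*X^12 + 87*X^11 + 134*X^10 - 237*X^9
      - 448*X^8 + 285*X^7 + 735*X^6 - 92*X^5 - 557*X^4 - 28*X^3 + 188*X^2
      + 11*X - 23 : ℚ[X]), ?_⟩
    simp only [TChain, tChain, add_comp, sub_comp, mul_comp, pow_comp, X_comp,
      one_comp, ofNat_comp, natCast_comp]
    ring
end
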